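/- The set U₄ of 56 orthogonal product states in ℂ^(Fin 4 × Fin 4 × Fin 4) is an unextendible product basis: if u, v, w ∈ ℂ⁴ are such that the product vector u ⊗ v ⊗ w is orthogonal to every member of U₄, then u ⊗ v ⊗ w = 0 (equivalently, u = 0 or v = 0 or w = 0). -/
import Mathlib


open scoped ComplexOrder

noncomputable section

/-- ω = exp(2πi/3) -/
def w3 : ℂ := Complex.exp (2 * Real.pi * Complex.I / 3)

/-- standard basis vectors of ℂ⁴ -/
def e4 (a : Fin 4) : Fin 4 → ℂ := fun k => if k = a then 1 else 0

/-- η_i = Σ_{k=0}^{2} ω^{ik} e_k -/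
def eta4 (i : Fin 3) : Fin 4 → ℂ :=
  fun a => ∑ t : Fin 3, w3 ^ ((i : ℕ) * (t : ℕ)) * e4 (Fin.castSucc t) a

/-- ξ_j = Σ_{k=0}^{2} ω^{jk} e_{k+1} -/
def xi4 (j : Fin 3) : Fin 4 → ℂ :=
  fun a => ∑ t : Fin 3, w3 ^ ((j : ℕ) * (t : ℕ)) * e4 t.succ a

/-- φ_i = e₁ + (−1)^i e₂ -/
def phi4 (i : Fin 2) : Fin 4 → ℂ := fun k => e4 1 k + (-1 : ℂ) ^ (i : ℕ) * e4 2 k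

/-- the product vector u ⊗ v ⊗ w -/
def tp4 (u v w : Fin 4 → ℂ) : Fin 4 × Fin 4 × Fin 4 → ℂ :=
  fun p => u p.1 * v p.2.1 * w p.2.2

/-- the stopper state S -/
def stop4 : Fin 4 × Fin 4 × Fin 4 → ℂ :=
  tp4 (fun a => ∑ i : Fin 4, e4 i a) (fun a => ∑ i : Fin 4, e4 i a)
    (fun a => ∑ i : Fin 4, e4 i a)

/-- the 56-member set U₄ -/
def U4 : Set (Fin 4 × Fin 4 × Fin 4 → ℂ) :=
  {x | ∃ r s t : Fin 2, (r, s, t) ≠ (0, 0, 0) ∧ x = tp4 (phi4 r) (phi4 s) (phi4 t)} ∪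
  {x | ∃ i j : Fin 3, (i, j) ≠ (0, 0) ∧
      (x = tp4 (xi4 j) (e4 0) (eta4 i) ∨ x = tp4 (xi4 j) (eta4 i) (e4 3) ∨
       x = tp4 (e4 3) (xi4 j) (eta4 i) ∨ x = tp4 (eta4 i) (e4 3) (xi4 j) ∨
       x = tp4 (eta4 i) (xi4 j) (e4 0) ∨ x = tp4 (e4 0) (eta4 i) (xi4 j))} ∪ {stop4}

/-- the standard Hermitian inner product on ℂ^(Fin 4 × Fin 4 × Fin 4) -/
def inp4 (x y : Fin 4 × Fin 4 × Fin 4 → ℂ) : ℂ :=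
  ∑ p, (starRingEnd ℂ) (x p) * y p

namespace U4P

/-- conjugate of w3, also a primitive cube root of unity -/
def mu : ℂ := (starRingEnd ℂ) w3

lemma w3_prim : IsPrimitiveRoot w3 3 := by
  have := Complex.isPrimitiveRoot_exp 3 (by norm_num)
  simpa [w3] using this

lemma hs3 : 1 + mu + mu ^ 2 = 0 := by
  have h1 : 1 + w3 + w3 ^ 2 = 0 := by
    have h := w3_prim.pow_eq_one
    have hne : w3 ≠ 1 := w3_prim.ne_one (by norm_num)
    have : (w3 - 1) * (1 + w3 + w3 ^ 2) = 0 := by linear_combination h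
    rcases mul_eq_zero.mp this with h' | h'
    · exact absurd (by linear_combination h') hne
    · exact h'
  have := congrArg (starRingEnd ℂ) h1
  simpa [mu, map_add, map_pow] using this

lemma hmu3 : mu ^ 3 = 1 := by linear_combination (mu - 1) * hs3

lemma hmu_ne_zero : mu ≠ 0 := by
  intro h; have := hs3; rw [h] at this; norm_num at this

lemma hmu_ne_one : mu ≠ 1 := by
  intro h; have := hs3; rw [h] at this; norm_num at this

end U4P
namespace U4P

def ip (x y : Fin 4 → ℂ) : ℂ := ∑ k, (starRingEnd ℂ) (x k) * y k

lemma inp4_tp4 (a b c u v w : Fin 4 → ℂ) :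
    inp4 (tp4 a b c) (tp4 u v w) = ip a u * (ip b v * ip c w) := by
  have key : ∀ p : Fin 4 × Fin 4 × Fin 4,
      (starRingEnd ℂ) (tp4 a b c p) * tp4 u v w p =
      ((starRingEnd ℂ) (a p.1) * u p.1) *
        (((starRingEnd ℂ) (b p.2.1) * v p.2.1) * ((starRingEnd ℂ) (c p.2.2) * w p.2.2)) := by
    intro p; simp [tp4, map_mul]; ring
  rw [inp4]
  simp_rw [key]
  rw [Fintype.sum_prod_type]
  simp_rw [Fintype.sum_prod_type, ← Finset.mul_sum, ← Finset.sum_mul]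
  rfl

lemma ip_e4 (a : Fin 4) (x : Fin 4 → ℂ) : ip (e4 a) x = x a := by
  simp [ip, e4, apply_ite]

def Hm (i : Fin 3) (x : Fin 4 → ℂ) : ℂ :=
  x 0 + mu ^ (i : ℕ) * x 1 + mu ^ ((i : ℕ) * 2) * x 2

def Xm (j : Fin 3) (x : Fin 4 → ℂ) : ℂ :=
  x 1 + mu ^ (j : ℕ) * x 2 + mu ^ ((j : ℕ) * 2) * x 3

def Pm (r : Fin 2) (x : Fin 4 → ℂ) : ℂ := x 1 + (-1 : ℂ) ^ (r : ℕ) * x 2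

def Sm (x : Fin 4 → ℂ) : ℂ := x 0 + x 1 + x 2 + x 3

lemma castSucc_vals : Fin.castSucc (0 : Fin 3) = (0 : Fin 4) ∧ Fin.castSucc (1 : Fin 3) = (1 : Fin 4) ∧ Fin.castSucc (2 : Fin 3) = (2 : Fin 4) := by decide

lemma succ_vals : Fin.succ (0 : Fin 3) = (1 : Fin 4) ∧ Fin.succ (1 : Fin 3) = (2 : Fin 4) ∧ Fin.succ (2 : Fin 3) = (3 : Fin 4) := by decide

lemma ip_eta4 (i : Fin 3) (x : Fin 4 → ℂ) : ip (eta4 i) x = Hm i x := by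
  simp [ip, eta4, e4, Fin.sum_univ_four, Fin.sum_univ_three, Hm, mu, map_mul, map_pow,
    mul_comm, castSucc_vals.1, castSucc_vals.2.1, castSucc_vals.2.2]

lemma ip_xi4 (j : Fin 3) (x : Fin 4 → ℂ) : ip (xi4 j) x = Xm j x := by
  simp [ip, xi4, e4, Fin.sum_univ_four, Fin.sum_univ_three, Xm, mu, map_mul, map_pow,
    mul_comm, succ_vals.1, succ_vals.2.1, succ_vals.2.2]

lemma ip_phi4 (r : Fin 2) (x : Fin 4 → ℂ) : ip (phi4 r) x = Pm r x := by
  simp [ip, phi4, e4, Fin.sum_univ_four, Pm, map_pow]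

lemma ip_ones (x : Fin 4 → ℂ) : ip (fun a => ∑ i : Fin 4, e4 i a) x = Sm x := by
  simp [ip, e4, Fin.sum_univ_four, Sm]

end U4P
namespace U4P

/-- all scalar orthogonality conditions -/
structure Cond (u v w : Fin 4 → ℂ) : Prop where
  c0 : ∀ r s t : Fin 2, (r, s, t) ≠ (0, 0, 0) → Pm r u * (Pm s v * Pm t w) = 0
  c1 : ∀ i j : Fin 3, (i, j) ≠ (0, 0) → Xm j u * (v 0 * Hm i w) = 0
  c2 : ∀ i j : Fin 3, (i, j) ≠ (0, 0) → Xm j u * (Hm i v * w 3) = 0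
  c3 : ∀ i j : Fin 3, (i, j) ≠ (0, 0) → u 3 * (Xm j v * Hm i w) = 0
  c4 : ∀ i j : Fin 3, (i, j) ≠ (0, 0) → Hm i u * (v 3 * Xm j w) = 0
  c5 : ∀ i j : Fin 3, (i, j) ≠ (0, 0) → Hm i u * (Xm j v * w 0) = 0
  c6 : ∀ i j : Fin 3, (i, j) ≠ (0, 0) → u 0 * (Hm i v * Xm j w) = 0
  c7 : Sm u * (Sm v * Sm w) = 0

lemma cond_of_h (u v w : Fin 4 → ℂ) (h : ∀ x ∈ U4, inp4 x (tp4 u v w) = 0) :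
    Cond u v w := by
  constructor
  · intro r s t hrst
    have := h (tp4 (phi4 r) (phi4 s) (phi4 t)) (Or.inl (Or.inl ⟨r, s, t, hrst, rfl⟩))
    rwa [inp4_tp4, ip_phi4, ip_phi4, ip_phi4] at this
  · intro i j hij
    have := h (tp4 (xi4 j) (e4 0) (eta4 i))
      (Or.inl (Or.inr ⟨i, j, hij, Or.inl rfl⟩))
    rwa [inp4_tp4, ip_xi4, ip_e4, ip_eta4] at this
  · intro i j hij
    have := h (tp4 (xi4 j) (eta4 i) (e4 3))
      (Or.inl (Or.inr ⟨i, j, hij, Or.inr (Or.inl rfl)⟩))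
    rwa [inp4_tp4, ip_xi4, ip_e4, ip_eta4] at this
  · intro i j hij
    have := h (tp4 (e4 3) (xi4 j) (eta4 i))
      (Or.inl (Or.inr ⟨i, j, hij, Or.inr (Or.inr (Or.inl rfl))⟩))
    rwa [inp4_tp4, ip_xi4, ip_e4, ip_eta4] at this
  · intro i j hij
    have := h (tp4 (eta4 i) (e4 3) (xi4 j))
      (Or.inl (Or.inr ⟨i, j, hij, Or.inr (Or.inr (Or.inr (Or.inl rfl)))⟩))
    rwa [inp4_tp4, ip_xi4, ip_e4, ip_eta4] at this
  · intro i j hij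
    have := h (tp4 (eta4 i) (xi4 j) (e4 0))
      (Or.inl (Or.inr ⟨i, j, hij, Or.inr (Or.inr (Or.inr (Or.inr (Or.inl rfl))))⟩))
    rwa [inp4_tp4, ip_xi4, ip_e4, ip_eta4] at this
  · intro i j hij
    have := h (tp4 (e4 0) (eta4 i) (xi4 j))
      (Or.inl (Or.inr ⟨i, j, hij, Or.inr (Or.inr (Or.inr (Or.inr (Or.inr rfl))))⟩))
    rwa [inp4_tp4, ip_xi4, ip_e4, ip_eta4] at this
  · have := h stop4 (Or.inr rfl)
    rwa [stop4, inp4_tp4, ip_ones, ip_ones, ip_ones] at this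

lemma fin2_ne (r s t : Fin 2) (hrst : (r, s, t) ≠ ((0 : Fin 2), (0 : Fin 2), (0 : Fin 2))) :
    (t, r, s) ≠ ((0 : Fin 2), (0 : Fin 2), (0 : Fin 2)) := by
  simp only [ne_eq, Prod.mk.injEq, not_and] at *
  tauto

lemma cond_cyc {u v w : Fin 4 → ℂ} (hc : Cond u v w) : Cond v w u := by
  constructor
  · intro r s t hrst
    have := hc.c0 t r s (fin2_ne r s t hrst)
    linear_combination this
  · intro i j hij; linear_combination hc.c5 i j hij
  · intro i j hij; linear_combination hc.c3 i j hij
  · intro i j hij; linear_combination hc.c4 i j hij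
  · intro i j hij; linear_combination hc.c2 i j hij
  · intro i j hij; linear_combination hc.c6 i j hij
  · intro i j hij; linear_combination hc.c1 i j hij
  · linear_combination hc.c7

end U4P
namespace U4P

lemma Hm0 (x : Fin 4 → ℂ) : Hm 0 x = x 0 + x 1 + x 2 := by norm_num [Hm]
lemma Hm1 (x : Fin 4 → ℂ) : Hm 1 x = x 0 + mu * x 1 + mu ^ 2 * x 2 := by norm_num [Hm]
lemma Hm2 (x : Fin 4 → ℂ) : Hm 2 x = x 0 + mu ^ 2 * x 1 + mu ^ 4 * x 2 := by norm_num [Hm]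
lemma Xm0 (x : Fin 4 → ℂ) : Xm 0 x = x 1 + x 2 + x 3 := by norm_num [Xm]
lemma Xm1 (x : Fin 4 → ℂ) : Xm 1 x = x 1 + mu * x 2 + mu ^ 2 * x 3 := by norm_num [Xm]
lemma Xm2 (x : Fin 4 → ℂ) : Xm 2 x = x 1 + mu ^ 2 * x 2 + mu ^ 4 * x 3 := by norm_num [Xm]
lemma Pm0 (x : Fin 4 → ℂ) : Pm 0 x = x 1 + x 2 := by norm_num [Pm]
lemma Pm1 (x : Fin 4 → ℂ) : Pm 1 x = x 1 - x 2 := by norm_num [Pm]; ring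

lemma flat_core {a b c : ℂ} (h1 : a + mu * b + mu ^ 2 * c = 0)
    (h2 : a + mu ^ 2 * b + mu ^ 4 * c = 0) : a = b ∧ b = c := by
  have hbc : (mu * (1 - mu)) * (b - c) = 0 := by linear_combination h1 - h2 + c * mu * hmu3
  have hbc' : b = c := by
    rcases mul_eq_zero.mp hbc with h | h
    · rcases mul_eq_zero.mp h with h | h
      · exact absurd h hmu_ne_zero
      · exact absurd (by linear_combination -h) hmu_ne_one
    · linear_combination h
  refine ⟨?_, hbc'⟩
  linear_combination h1 - b * hs3 + mu ^ 2 * hbc'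

lemma zero_core {a b c : ℂ} (h0 : a + b + c = 0) (h1 : a + mu * b + mu ^ 2 * c = 0)
    (h2 : a + mu ^ 2 * b + mu ^ 4 * c = 0) : a = 0 ∧ b = 0 ∧ c = 0 := by
  obtain ⟨e1, e2⟩ := flat_core h1 h2
  have ha : a = 0 := by
    have h3 : (3 : ℂ) * a = 0 := by linear_combination h0 + e1 + e1 + e2
    have := mul_eq_zero.mp h3
    simpa using this
  exact ⟨ha, by rw [← e1]; exact ha, by rw [← e2, ← e1]; exact ha⟩

lemma pairs {X H : Fin 3 → ℂ} (h : ∀ i j : Fin 3, (i, j) ≠ (0, 0) → X j * H i = 0) :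
    ((X 1 = 0 ∧ X 2 = 0) ∨ (H 0 = 0 ∧ H 1 = 0 ∧ H 2 = 0)) ∧
    ((H 1 = 0 ∧ H 2 = 0) ∨ (X 0 = 0 ∧ X 1 = 0 ∧ X 2 = 0)) := by
  have hXall : ∀ j : Fin 3, j ≠ 0 → X j ≠ 0 → ∀ i : Fin 3, H i = 0 := by
    intro j hj hXj i
    have hne : ((i, j) : Fin 3 × Fin 3) ≠ (0, 0) := by
      simp only [ne_eq, Prod.mk.injEq, not_and]; exact fun _ => hj
    exact (mul_eq_zero.mp (h i j hne)).resolve_left hXj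
  have hHall : ∀ i : Fin 3, i ≠ 0 → H i ≠ 0 → ∀ j : Fin 3, X j = 0 := by
    intro i hi hHi j
    have hne : ((i, j) : Fin 3 × Fin 3) ≠ (0, 0) := by
      simp only [ne_eq, Prod.mk.injEq, not_and]; intro hh; exact absurd hh hi
    exact (mul_eq_zero.mp (h i j hne)).resolve_right hHi
  constructor
  · by_cases h1 : X 1 = 0
    · by_cases h2 : X 2 = 0
      · exact Or.inl ⟨h1, h2⟩
      · exact Or.inr ⟨hXall 2 (by decide) h2 0, hXall 2 (by decide) h2 1, hXall 2 (by decide) h2 2⟩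
    · exact Or.inr ⟨hXall 1 (by decide) h1 0, hXall 1 (by decide) h1 1, hXall 1 (by decide) h1 2⟩
  · by_cases h1 : H 1 = 0
    · by_cases h2 : H 2 = 0
      · exact Or.inl ⟨h1, h2⟩
      · exact Or.inr ⟨hHall 2 (by decide) h2 0, hHall 2 (by decide) h2 1, hHall 2 (by decide) h2 2⟩
    · exact Or.inr ⟨hHall 1 (by decide) h1 0, hHall 1 (by decide) h1 1, hHall 1 (by decide) h1 2⟩

end U4P
namespace U4P

lemma Xm_zero {x : Fin 4 → ℂ} (h1 : x 1 = 0) (h2 : x 2 = 0) (h3 : x 3 = 0) (j : Fin 3) :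
    Xm j x = 0 := by simp [Xm, h1, h2, h3]

lemma Hm_zero {x : Fin 4 → ℂ} (h0 : x 0 = 0) (h1 : x 1 = 0) (h2 : x 2 = 0) (i : Fin 3) :
    Hm i x = 0 := by simp [Hm, h0, h1, h2]

lemma XH_pairs {x y : Fin 4 → ℂ}
    (h : ∀ i j : Fin 3, (i, j) ≠ (0, 0) → Xm j x * Hm i y = 0) :
    ((x 1 = x 2 ∧ x 2 = x 3) ∨ (y 0 = 0 ∧ y 1 = 0 ∧ y 2 = 0)) ∧
    ((y 0 = y 1 ∧ y 1 = y 2) ∨ (x 1 = 0 ∧ x 2 = 0 ∧ x 3 = 0)) := by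
  obtain ⟨hA, hB⟩ := pairs (X := fun j => Xm j x) (H := fun i => Hm i y) h
  constructor
  · rcases hA with ⟨h1, h2⟩ | ⟨h0, h1, h2⟩
    · exact Or.inl (flat_core (by rw [← Xm1 x]; exact h1) (by rw [← Xm2 x]; exact h2))
    · exact Or.inr (zero_core (by rw [← Hm0 y]; exact h0) (by rw [← Hm1 y]; exact h1)
        (by rw [← Hm2 y]; exact h2))
  · rcases hB with ⟨h1, h2⟩ | ⟨h0, h1, h2⟩
    · exact Or.inl (flat_core (by rw [← Hm1 y]; exact h1) (by rw [← Hm2 y]; exact h2))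
    · exact Or.inr (zero_core (by rw [← Xm0 x]; exact h0) (by rw [← Xm1 x]; exact h1)
        (by rw [← Xm2 x]; exact h2))

lemma vec_zero {x : Fin 4 → ℂ} (h0 : x 0 = 0) (h1 : x 1 = 0) (h2 : x 2 = 0) (h3 : x 3 = 0) :
    x = 0 := by
  funext k; fin_cases k <;> simpa

lemma pair_ne_left (j : Fin 3) : ((1 : Fin 3), j) ≠ ((0 : Fin 3), (0 : Fin 3)) := by
  simp [Prod.ext_iff]

lemma pair_ne_right (i : Fin 3) : (i, (1 : Fin 3)) ≠ ((0 : Fin 3), (0 : Fin 3)) := by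
  simp [Prod.ext_iff]

end U4P
namespace U4P

/-- the middle vector cannot be supported on e₀ alone -/
lemma notE0mid {u v w : Fin 4 → ℂ} (hc : Cond u v w) (hu : u ≠ 0) (hv : v ≠ 0)
    (hw : w ≠ 0) : ¬ (v 1 = 0 ∧ v 2 = 0 ∧ v 3 = 0) := by
  rintro ⟨hv1, hv2, hv3⟩
  have hv0 : v 0 ≠ 0 := fun h => hv (vec_zero h hv1 hv2 hv3)
  have hHv : ∀ i, Hm i v = v 0 := fun i => by simp [Hm, hv1, hv2]
  -- c2': ∀ j, Xm j u * w 3 = 0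
  have c2' : ∀ j, Xm j u * w 3 = 0 := by
    intro j
    have h := hc.c2 1 j (pair_ne_left j)
    rw [hHv 1] at h
    have h' : (Xm j u * w 3) * v 0 = 0 := by linear_combination h
    exact (mul_eq_zero.mp h').resolve_right hv0
  -- c6': ∀ j, u 0 * Xm j w = 0
  have c6' : ∀ j, u 0 * Xm j w = 0 := by
    intro j
    have h := hc.c6 1 j (pair_ne_left j)
    rw [hHv 1] at h
    have h' : (u 0 * Xm j w) * v 0 = 0 := by linear_combination h
    exact (mul_eq_zero.mp h').resolve_right hv0
  -- c1': pairs for u, w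
  have c1' : ∀ i j : Fin 3, (i, j) ≠ (0, 0) → Xm j u * Hm i w = 0 := by
    intro i j hij
    have h := hc.c1 i j hij
    have h' : (Xm j u * Hm i w) * v 0 = 0 := by linear_combination h
    exact (mul_eq_zero.mp h').resolve_right hv0
  -- c7': Sm u * Sm w = 0
  have hSv : Sm v = v 0 := by simp [Sm, hv1, hv2, hv3]
  have c7' : Sm u * Sm w = 0 := by
    have h := hc.c7
    rw [hSv] at h
    have h' : (Sm u * Sm w) * v 0 = 0 := by linear_combination h
    exact (mul_eq_zero.mp h').resolve_right hv0
  by_cases hXu : Xm 0 u = 0 ∧ Xm 1 u = 0 ∧ Xm 2 u = 0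
  · -- u supported on e₀
    obtain ⟨hu1, hu2, hu3⟩ := zero_core (by rw [← Xm0 u]; exact hXu.1)
      (by rw [← Xm1 u]; exact hXu.2.1) (by rw [← Xm2 u]; exact hXu.2.2)
    have hu0 : u 0 ≠ 0 := fun h => hu (vec_zero h hu1 hu2 hu3)
    have hXw : ∀ j, Xm j w = 0 := fun j => (mul_eq_zero.mp (c6' j)).resolve_left hu0
    obtain ⟨hw1, hw2, hw3⟩ := zero_core (by rw [← Xm0 w]; exact hXw 0)
      (by rw [← Xm1 w]; exact hXw 1) (by rw [← Xm2 w]; exact hXw 2)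
    have hw0 : w 0 ≠ 0 := fun h => hw (vec_zero h hw1 hw2 hw3)
    have hSu : Sm u = u 0 := by simp [Sm, hu1, hu2, hu3]
    have hSw : Sm w = w 0 := by simp [Sm, hw1, hw2, hw3]
    rw [hSu, hSw] at c7'
    rcases mul_eq_zero.mp c7' with h | h
    exacts [hu0 h, hw0 h]
  · have hj : ∃ j, Xm j u ≠ 0 := by
      by_contra hcon; push_neg at hcon; exact hXu ⟨hcon 0, hcon 1, hcon 2⟩
    obtain ⟨j, hj⟩ := hj
    have hw3 : w 3 = 0 := (mul_eq_zero.mp (c2' j)).resolve_left hj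
    obtain ⟨hP1, hP2⟩ := XH_pairs c1'
    rcases hP1 with ⟨hu12, hu23⟩ | ⟨hw0, hw1, hw2⟩
    · -- u flat on 1,2,3; w flat on 0,1,2 (from hP2)
      rcases hP2 with ⟨hw01, hw12⟩ | ⟨hz1, hz2, hz3⟩
      · have hw1' : w 1 ≠ 0 := by
          intro h
          exact hw (vec_zero (by rw [hw01, h]) h (by rw [← hw12, h]) hw3)
        have hX0w : Xm 0 w = 2 * w 1 := by rw [Xm0, ← hw12, hw3]; ring
        have hu0 : u 0 = 0 := by
          have := c6' 0
          rw [hX0w] at this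
          rcases mul_eq_zero.mp this with h | h
          · exact h
          · exact absurd (by
              rcases mul_eq_zero.mp h with h' | h'
              · exact absurd h' (by norm_num)
              · exact h') hw1'
        have hu1 : u 1 ≠ 0 := by
          intro h
          exact hj (Xm_zero h (by rw [← hu12]; exact h) (by rw [← hu23, ← hu12]; exact h) j)
        have hSu : Sm u = 3 * u 1 := by rw [Sm, hu0, ← hu12, ← hu23, ← hu12]; ring
        have hSw : Sm w = 3 * w 1 := by rw [Sm, hw01, ← hw12, hw3]; ring
        rw [hSu, hSw] at c7'
        rcases mul_eq_zero.mp c7' with h | h <;>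
          rcases mul_eq_zero.mp h with h' | h'
        · exact absurd h' (by norm_num)
        · exact hu1 h'
        · exact absurd h' (by norm_num)
        · exact hw1' h'
      · exact hj (Xm_zero hz1 hz2 hz3 j)
    · exact hw (vec_zero hw0 hw1 hw2 hw3)

end U4P
namespace U4P

/-- the middle vector cannot be supported on e₃ alone -/
lemma notE3mid {u v w : Fin 4 → ℂ} (hc : Cond u v w) (hu : u ≠ 0) (hv : v ≠ 0)
    (hw : w ≠ 0) : ¬ (v 0 = 0 ∧ v 1 = 0 ∧ v 2 = 0) := by
  rintro ⟨hv0, hv1, hv2⟩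
  have hv3 : v 3 ≠ 0 := fun h => hv (vec_zero hv0 hv1 hv2 h)
  have hXv : ∀ j, Xm j v = mu ^ ((j : ℕ) * 2) * v 3 := fun j => by simp [Xm, hv1, hv2]
  have hXv1 : Xm 1 v * v 3 ≠ 0 → True := fun _ => trivial
  have hX1v_ne : Xm 1 v ≠ 0 := by
    rw [hXv 1]
    exact mul_ne_zero (pow_ne_zero _ hmu_ne_zero) hv3
  -- c3': ∀ i, u 3 * Hm i w = 0
  have c3' : ∀ i, u 3 * Hm i w = 0 := by
    intro i
    have h := hc.c3 i 1 (pair_ne_right i)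
    have h' : (u 3 * Hm i w) * Xm 1 v = 0 := by linear_combination h
    exact (mul_eq_zero.mp h').resolve_right hX1v_ne
  -- c5': ∀ i, Hm i u * w 0 = 0
  have c5' : ∀ i, Hm i u * w 0 = 0 := by
    intro i
    have h := hc.c5 i 1 (pair_ne_right i)
    have h' : (Hm i u * w 0) * Xm 1 v = 0 := by linear_combination h
    exact (mul_eq_zero.mp h').resolve_right hX1v_ne
  -- c4': pairs for w (X side), u (H side)
  have c4' : ∀ i j : Fin 3, (i, j) ≠ (0, 0) → Xm j w * Hm i u = 0 := by
    intro i j hij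
    have h := hc.c4 i j hij
    have h' : (Xm j w * Hm i u) * v 3 = 0 := by linear_combination h
    exact (mul_eq_zero.mp h').resolve_right hv3
  have hSv : Sm v = v 3 := by simp [Sm, hv0, hv1, hv2]
  have c7' : Sm u * Sm w = 0 := by
    have h := hc.c7
    rw [hSv] at h
    have h' : (Sm u * Sm w) * v 3 = 0 := by linear_combination h
    exact (mul_eq_zero.mp h').resolve_right hv3
  by_cases hHu : Hm 0 u = 0 ∧ Hm 1 u = 0 ∧ Hm 2 u = 0
  · obtain ⟨hu0, hu1, hu2⟩ := zero_core (by rw [← Hm0 u]; exact hHu.1)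
      (by rw [← Hm1 u]; exact hHu.2.1) (by rw [← Hm2 u]; exact hHu.2.2)
    have hu3 : u 3 ≠ 0 := fun h => hu (vec_zero hu0 hu1 hu2 h)
    have hHw : ∀ i, Hm i w = 0 := fun i => (mul_eq_zero.mp (c3' i)).resolve_left hu3
    obtain ⟨hw0, hw1, hw2⟩ := zero_core (by rw [← Hm0 w]; exact hHw 0)
      (by rw [← Hm1 w]; exact hHw 1) (by rw [← Hm2 w]; exact hHw 2)
    have hw3 : w 3 ≠ 0 := fun h => hw (vec_zero hw0 hw1 hw2 h)
    have hSu : Sm u = u 3 := by simp [Sm, hu0, hu1, hu2]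
    have hSw : Sm w = w 3 := by simp [Sm, hw0, hw1, hw2]
    rw [hSu, hSw] at c7'
    rcases mul_eq_zero.mp c7' with h | h
    exacts [hu3 h, hw3 h]
  · have hi : ∃ i, Hm i u ≠ 0 := by
      by_contra hcon; push_neg at hcon; exact hHu ⟨hcon 0, hcon 1, hcon 2⟩
    obtain ⟨i, hi⟩ := hi
    have hw0 : w 0 = 0 := (mul_eq_zero.mp (c5' i)).resolve_left hi
    obtain ⟨hP1, hP2⟩ := XH_pairs c4'
    rcases hP1 with ⟨hw12, hw23⟩ | ⟨hz0, hz1, hz2⟩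
    · rcases hP2 with ⟨hu01, hu12⟩ | ⟨hz1, hz2, hz3⟩
      · have hw1' : w 1 ≠ 0 := by
          intro h
          exact hw (vec_zero hw0 h (by rw [← hw12]; exact h) (by rw [← hw23, ← hw12]; exact h))
        have hH0w : Hm 0 w = 2 * w 1 := by rw [Hm0, hw0, ← hw12]; ring
        have hu3 : u 3 = 0 := by
          have := c3' 0
          rw [hH0w] at this
          rcases mul_eq_zero.mp this with h | h
          · exact h
          · rcases mul_eq_zero.mp h with h' | h'
            · exact absurd h' (by norm_num)
            · exact absurd h' hw1'
        have hu0' : u 0 ≠ 0 := by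
          intro h
          exact hu (vec_zero h (by rw [← hu01]; exact h) (by rw [← hu12, ← hu01]; exact h) hu3)
        have hSu : Sm u = 3 * u 0 := by rw [Sm, ← hu01, ← hu12, ← hu01, hu3]; ring
        have hSw : Sm w = 3 * w 1 := by rw [Sm, hw0, ← hw12, ← hw23, ← hw12]; ring
        rw [hSu, hSw] at c7'
        rcases mul_eq_zero.mp c7' with h | h <;>
          rcases mul_eq_zero.mp h with h' | h'
        · exact absurd h' (by norm_num)
        · exact hu0' h'
        · exact absurd h' (by norm_num)
        · exact hw1' h'
      · exact hw (vec_zero hw0 hz1 hz2 hz3)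
    · exact hi (Hm_zero hz0 hz1 hz2 i)

end U4P
namespace U4P

/-- under Cond with all vectors nonzero, the first vector vanishes at both ends -/
lemma ends {u v w : Fin 4 → ℂ} (hc : Cond u v w) (hu : u ≠ 0) (hv : v ≠ 0) (hw : w ≠ 0)
    (nE0u : ¬(u 1 = 0 ∧ u 2 = 0 ∧ u 3 = 0)) (nE3u : ¬(u 0 = 0 ∧ u 1 = 0 ∧ u 2 = 0))
    (nE0v : ¬(v 1 = 0 ∧ v 2 = 0 ∧ v 3 = 0)) (nE3v : ¬(v 0 = 0 ∧ v 1 = 0 ∧ v 2 = 0))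
    (nE0w : ¬(w 1 = 0 ∧ w 2 = 0 ∧ w 3 = 0)) (nE3w : ¬(w 0 = 0 ∧ w 1 = 0 ∧ w 2 = 0)) :
    u 0 = 0 ∧ u 3 = 0 := by
  -- cancellation helpers
  have F6 : u 0 ≠ 0 → (v 0 = v 1 ∧ v 1 = v 2) ∧ (w 1 = w 2 ∧ w 2 = w 3) := by
    intro hu0
    have hp : ∀ i j : Fin 3, (i, j) ≠ (0, 0) → Xm j w * Hm i v = 0 := by
      intro i j hij
      have h' : (Xm j w * Hm i v) * u 0 = 0 := by linear_combination hc.c6 i j hij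
      exact (mul_eq_zero.mp h').resolve_right hu0
    obtain ⟨hA, hB⟩ := XH_pairs hp
    exact ⟨hB.resolve_right nE0w, hA.resolve_right nE3v⟩
  have F1 : v 0 ≠ 0 → (u 1 = u 2 ∧ u 2 = u 3) ∧ (w 0 = w 1 ∧ w 1 = w 2) := by
    intro hv0
    have hp : ∀ i j : Fin 3, (i, j) ≠ (0, 0) → Xm j u * Hm i w = 0 := by
      intro i j hij
      have h' : (Xm j u * Hm i w) * v 0 = 0 := by linear_combination hc.c1 i j hij
      exact (mul_eq_zero.mp h').resolve_right hv0
    obtain ⟨hA, hB⟩ := XH_pairs hp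
    exact ⟨hA.resolve_right nE3w, hB.resolve_right nE0u⟩
  have F3 : u 3 ≠ 0 → (v 1 = v 2 ∧ v 2 = v 3) ∧ (w 0 = w 1 ∧ w 1 = w 2) := by
    intro hu3
    have hp : ∀ i j : Fin 3, (i, j) ≠ (0, 0) → Xm j v * Hm i w = 0 := by
      intro i j hij
      have h' : (Xm j v * Hm i w) * u 3 = 0 := by linear_combination hc.c3 i j hij
      exact (mul_eq_zero.mp h').resolve_right hu3
    obtain ⟨hA, hB⟩ := XH_pairs hp
    exact ⟨hA.resolve_right nE3w, hB.resolve_right nE0v⟩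
  have F4 : v 3 ≠ 0 → (u 0 = u 1 ∧ u 1 = u 2) ∧ (w 1 = w 2 ∧ w 2 = w 3) := by
    intro hv3
    have hp : ∀ i j : Fin 3, (i, j) ≠ (0, 0) → Xm j w * Hm i u = 0 := by
      intro i j hij
      have h' : (Xm j w * Hm i u) * v 3 = 0 := by linear_combination hc.c4 i j hij
      exact (mul_eq_zero.mp h').resolve_right hv3
    obtain ⟨hA, hB⟩ := XH_pairs hp
    exact ⟨hB.resolve_right nE0w, hA.resolve_right nE3u⟩
  have chain : u 0 ≠ 0 → False := by
    intro hu0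
    obtain ⟨⟨hv01, hv12⟩, ⟨hw12, hw23⟩⟩ := F6 hu0
    have hv0 : v 0 ≠ 0 := fun h => nE3v ⟨h, by rw [← hv01]; exact h, by rw [← hv12, ← hv01]; exact h⟩
    obtain ⟨⟨hu12, hu23⟩, ⟨hw01, hw12'⟩⟩ := F1 hv0
    have hu3 : u 3 ≠ 0 := fun h =>
      nE0u ⟨by rw [hu12, hu23]; exact h, by rw [hu23]; exact h, h⟩
    obtain ⟨⟨hv12', hv23⟩, _⟩ := F3 hu3
    have hv3 : v 3 ≠ 0 := by rw [← hv23, ← hv12', ← hv01]; exact hv0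
    obtain ⟨⟨hu01, hu12''⟩, _⟩ := F4 hv3
    -- all three vectors are constant
    have hw0 : w 0 ≠ 0 := fun h =>
      nE3w ⟨h, by rw [← hw01]; exact h, by rw [← hw12', ← hw01]; exact h⟩
    have hSu : Sm u = 4 * u 0 := by
      rw [Sm]; linear_combination (-3 : ℂ) * hu01 - 2 * hu12 - hu23
    have hSv : Sm v = 4 * v 0 := by
      rw [Sm]; linear_combination (-3 : ℂ) * hv01 - 2 * hv12 - hv23
    have hSw : Sm w = 4 * w 0 := by
      rw [Sm]; linear_combination (-3 : ℂ) * hw01 - 2 * hw12 - hw23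
    have h := hc.c7
    rw [hSu, hSv, hSw] at h
    have h4 : (4 : ℂ) ≠ 0 := by norm_num
    rcases mul_eq_zero.mp h with h' | h'
    · rcases mul_eq_zero.mp h' with h'' | h''
      exacts [h4 h'', hu0 h'']
    · rcases mul_eq_zero.mp h' with h'' | h''
      · rcases mul_eq_zero.mp h'' with h3 | h3
        exacts [h4 h3, hv0 h3]
      · rcases mul_eq_zero.mp h'' with h3 | h3
        exacts [h4 h3, hw0 h3]
  constructor
  · by_contra hu0; exact chain hu0
  · by_contra hu3
    obtain ⟨⟨hv12, hv23⟩, _⟩ := F3 hu3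
    have hv3 : v 3 ≠ 0 := fun h =>
      nE0v ⟨by rw [hv12, hv23]; exact h, by rw [hv23]; exact h, h⟩
    obtain ⟨⟨hu01, hu12⟩, _⟩ := F4 hv3
    have hu0 : u 0 ≠ 0 := fun h =>
      nE3u ⟨h, by rw [← hu01]; exact h, by rw [← hu12, ← hu01]; exact h⟩
    exact chain hu0

end U4P
namespace U4P

lemma two2 {A0 A1 B0 B1 : ℂ} (h00 : A0 * B0 = 0) (h01 : A0 * B1 = 0)
    (h10 : A1 * B0 = 0) (h11 : A1 * B1 = 0) :
    (A0 = 0 ∧ A1 = 0) ∨ (B0 = 0 ∧ B1 = 0) := by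
  by_cases hA0 : A0 = 0
  · by_cases hA1 : A1 = 0
    · exact Or.inl ⟨hA0, hA1⟩
    · exact Or.inr ⟨(mul_eq_zero.mp h10).resolve_left hA1,
        (mul_eq_zero.mp h11).resolve_left hA1⟩
  · exact Or.inr ⟨(mul_eq_zero.mp h00).resolve_left hA0,
      (mul_eq_zero.mp h01).resolve_left hA0⟩

lemma pboth {x : Fin 4 → ℂ} (h0 : Pm 0 x = 0) (h1 : Pm 1 x = 0) :
    x 1 = 0 ∧ x 2 = 0 := by
  rw [Pm0] at h0; rw [Pm1] at h1
  constructor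
  · linear_combination (h0 + h1) / 2
  · linear_combination (h0 - h1) / 2

lemma pm1_key {x y z : Fin 4 → ℂ} (hcx : Cond x y z) (hy : ¬(y 1 = 0 ∧ y 2 = 0))
    (hz : ¬(z 1 = 0 ∧ z 2 = 0)) : Pm 1 x = 0 := by
  by_contra hP
  have hall : ∀ s t : Fin 2, Pm s y * Pm t z = 0 := by
    intro s t
    have hne : ((1 : Fin 2), s, t) ≠ ((0 : Fin 2), (0 : Fin 2), (0 : Fin 2)) := by
      simp [Prod.ext_iff]
    have h' : (Pm s y * Pm t z) * Pm 1 x = 0 := by linear_combination hcx.c0 1 s t hne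
    exact (mul_eq_zero.mp h').resolve_right hP
  rcases two2 (hall 0 0) (hall 0 1) (hall 1 0) (hall 1 1) with ⟨a, b⟩ | ⟨a, b⟩
  · exact hy (pboth a b)
  · exact hz (pboth a b)

/-- core contradiction: no nonzero triple satisfies all the conditions -/
lemma main_contra {u v w : Fin 4 → ℂ} (hc : Cond u v w) (hu : u ≠ 0) (hv : v ≠ 0)
    (hw : w ≠ 0) : False := by
  have hc2 := cond_cyc hc
  have hc3 := cond_cyc hc2
  have nE0v := notE0mid hc hu hv hw
  have nE3v := notE3mid hc hu hv hw
  have nE0w := notE0mid hc2 hv hw hu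
  have nE3w := notE3mid hc2 hv hw hu
  have nE0u := notE0mid hc3 hw hu hv
  have nE3u := notE3mid hc3 hw hu hv
  obtain ⟨hu0, hu3⟩ := ends hc hu hv hw nE0u nE3u nE0v nE3v nE0w nE3w
  obtain ⟨hv0, hv3⟩ := ends hc2 hv hw hu nE0v nE3v nE0w nE3w nE0u nE3u
  obtain ⟨hw0, hw3⟩ := ends hc3 hw hu hv nE0w nE3w nE0u nE3u nE0v nE3v
  have nE0u' : ¬(u 1 = 0 ∧ u 2 = 0) := fun ⟨a, b⟩ => nE0u ⟨a, b, hu3⟩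
  have nE0v' : ¬(v 1 = 0 ∧ v 2 = 0) := fun ⟨a, b⟩ => nE0v ⟨a, b, hv3⟩
  have nE0w' : ¬(w 1 = 0 ∧ w 2 = 0) := fun ⟨a, b⟩ => nE0w ⟨a, b, hw3⟩
  have hPu := pm1_key hc nE0v' nE0w'
  have hPv := pm1_key hc2 nE0w' nE0u'
  have hPw := pm1_key hc3 nE0u' nE0v'
  rw [Pm1] at hPu hPv hPw
  have hu1 : u 1 ≠ 0 := fun h => nE0u' ⟨h, by linear_combination h - hPu⟩
  have hv1 : v 1 ≠ 0 := fun h => nE0v' ⟨h, by linear_combination h - hPv⟩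
  have hw1 : w 1 ≠ 0 := fun h => nE0w' ⟨h, by linear_combination h - hPw⟩
  have hSu : Sm u = 2 * u 1 := by rw [Sm]; linear_combination hu0 - hPu + hu3
  have hSv : Sm v = 2 * v 1 := by rw [Sm]; linear_combination hv0 - hPv + hv3
  have hSw : Sm w = 2 * w 1 := by rw [Sm]; linear_combination hw0 - hPw + hw3
  have h := hc.c7
  rw [hSu, hSv, hSw] at h
  have h2 : (2 : ℂ) ≠ 0 := by norm_num
  rcases mul_eq_zero.mp h with h' | h'
  · rcases mul_eq_zero.mp h' with h'' | h''
    exacts [h2 h'', hu1 h'']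
  · rcases mul_eq_zero.mp h' with h'' | h''
    · rcases mul_eq_zero.mp h'' with h3 | h3
      exacts [h2 h3, hv1 h3]
    · rcases mul_eq_zero.mp h'' with h3 | h3
      exacts [h2 h3, hw1 h3]

end U4P

/-- U₄ is an unextendible product basis: any product vector orthogonal to every
member of U₄ is zero. -/
theorem U4_unextendible (u v w : Fin 4 → ℂ)
    (h : ∀ x ∈ U4, inp4 x (tp4 u v w) = 0) :
    tp4 u v w = 0 := by
  by_contra hne
  obtain ⟨p, hp⟩ := Function.ne_iff.mp hne
  simp only [tp4, Pi.zero_apply] at hp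
  have hu : u ≠ 0 := fun h0 => hp (by simp [h0])
  have hv : v ≠ 0 := fun h0 => hp (by simp [h0])
  have hw : w ≠ 0 := fun h0 => hp (by simp [h0])
  exact (U4P.main_contra (U4P.cond_of_h u v w h) hu hv hw).elim
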